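/- The transform G is a bijection from ℝ onto ℝ, G is Lipschitz continuous, and its global inverse G^{-1} : ℝ → ℝ is Lipschitz continuous. -/

import Mathlib

/-!
Write `G = id + g`, where `g` is the sum of the bump terms. The `k`-th term is supported in
`[ζ k - c, ζ k + c]`, is `C¹` with derivative bounded by `6 |α k| c`, and these intervals are
pairwise separated, so at every point at most one term has a nonzero derivative. By the mean
value theorem `g` is therefore `L`-Lipschitz with `L = max_k 6 |α k| c < 1`. A perturbation of
the identity by a contraction is `(1 + L)`-Lipschitz, `(1 - L)⁻¹`-antilipschitz, and onto by the
Banach fixed point theorem applied to `x ↦ y - g x`; the antilipschitz bound makes the inverse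
Lipschitz.
-/

open Set NNReal

/-- The bump function `φ(u) = (1+u)^3 (1-u)^3` for `|u| ≤ 1` and `φ(u) = 0` otherwise. -/
noncomputable def bumpPhi (u : ℝ) : ℝ := if |u| ≤ 1 then (1 + u) ^ 3 * (1 - u) ^ 3 else 0

/-- The transform `G(x) = x + ∑ k, α k * φ((x - ζ k)/c) * (x - ζ k) * |x - ζ k|`. -/
noncomputable def Gtransform (m : ℕ) (ζ α : Fin m → ℝ) (c : ℝ) (x : ℝ) : ℝ :=
  x + ∑ k : Fin m, α k * bumpPhi ((x - ζ k) / c) * ((x - ζ k) * |x - ζ k|)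

theorem hasDerivAt_ite_le {g h g' h' : ℝ → ℝ} {a : ℝ} (hg : ∀ t, HasDerivAt g (g' t) t)
    (hh : ∀ t, HasDerivAt h (h' t) t) (hval : g a = h a) (hder : g' a = h' a) (t : ℝ) :
    HasDerivAt (fun x => if x ≤ a then g x else h x) (if t ≤ a then g' t else h' t) t := by
  rcases lt_trichotomy t a with hta | rfl | hat
  · rw [if_pos hta.le]
    refine (hg t).congr_of_eventuallyEq ?_
    filter_upwards [eventually_lt_nhds hta] with x hx using if_pos hx.le
  · have hleft : EqOn (fun x => if x ≤ t then g x else h x) g (Iic t) := fun x hx => if_pos hx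
    have hright : EqOn (fun x => if x ≤ t then g x else h x) h (Ici t) := fun x hx => by
      rcases (mem_Ici.mp hx).eq_or_lt with rfl | hx
      · exact (if_pos le_rfl).trans hval
      · exact if_neg hx.not_ge
    rw [if_pos le_rfl, ← hasDerivWithinAt_univ, ← Iic_union_Ici (a := t)]
    exact ((hg t).hasDerivWithinAt.congr hleft (hleft self_mem_Iic)).union
      (hder ▸ (hh t).hasDerivWithinAt.congr hright (hright self_mem_Ici))
  · rw [if_neg hat.not_ge]
    refine (hh t).congr_of_eventuallyEq ?_
    filter_upwards [eventually_gt_nhds hat] with x hx using if_neg hx.not_ge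

theorem hasDerivAt_mul_abs (t : ℝ) : HasDerivAt (fun x => x * |x|) (2 * |t|) t := by
  have h := hasDerivAt_ite_le (a := 0) (fun t => ((hasDerivAt_id t).mul (hasDerivAt_id t)).neg)
    (fun t => (hasDerivAt_id t).mul (hasDerivAt_id t)) (by simp) (by simp) t
  convert h using 1
  · ext x
    split_ifs with hx
    · simp [abs_of_nonpos hx]
    · simp [abs_of_pos (not_le.mp hx)]
  · split_ifs with ht
    · rw [abs_of_nonpos ht, id_eq]; ring
    · rw [abs_of_pos (not_le.mp ht), id_eq]; ring

theorem hasDerivAt_max_zero_pow {n : ℕ} (hn : 1 < n) (t : ℝ) :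
    HasDerivAt (fun x => max x 0 ^ n) (n * max t 0 ^ (n - 1)) t := by
  have h := hasDerivAt_ite_le (a := 0) (fun _ => hasDerivAt_const _ (0 : ℝ))
    (fun t => hasDerivAt_pow n t) (by simp [zero_pow (by omega : n ≠ 0)])
    (by simp [zero_pow (by omega : n - 1 ≠ 0)]) t
  convert h using 1
  · ext x
    split_ifs with hx
    · rw [max_eq_right hx, zero_pow (by omega)]
    · rw [max_eq_left (not_le.mp hx).le]
  · split_ifs with ht
    · rw [max_eq_right ht, zero_pow (by omega), mul_zero]
    · rw [max_eq_left (not_le.mp ht).le]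

theorem Finset.nnnorm_sum_le_sup_of_pairwise {ι E : Type*} [SeminormedAddCommGroup E]
    (s : Finset ι) {f : ι → E} (hf : Pairwise fun i j => f i = 0 ∨ f j = 0) :
    ‖∑ i ∈ s, f i‖₊ ≤ s.sup fun i => ‖f i‖₊ := by
  by_cases h : ∃ i ∈ s, f i ≠ 0
  · obtain ⟨i, hi, hfi⟩ := h
    rw [Finset.sum_eq_single_of_mem i hi fun j _ hji => (hf hji).resolve_right hfi]
    exact Finset.le_sup (f := fun i => ‖f i‖₊) hi
  · push Not at h
    simp [Finset.sum_eq_zero h]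

namespace ContractingWith

variable {E : Type*} [NormedAddCommGroup E] {K : ℝ≥0} {g : E → E}

theorem lipschitzWith_id_add (hg : ContractingWith K g) :
    LipschitzWith (1 + K) fun x => x + g x :=
  LipschitzWith.id.add hg.2

theorem antilipschitzWith_id_add (hg : ContractingWith K g) :
    AntilipschitzWith (1 - K)⁻¹ fun x => x + g x := by
  simpa using AntilipschitzWith.id.add_lipschitzWith hg.2 (by simpa using hg.1)

theorem surjective_id_add [CompleteSpace E] (hg : ContractingWith K g) :
    Function.Surjective fun x => x + g x := by
  intro p
  have hp : ContractingWith K fun x => p - g x :=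
    ⟨hg.1, LipschitzWith.of_dist_le_mul fun x y => by
      rw [dist_sub_left]; exact hg.2.dist_le_mul x y⟩
  have hfix : p - g hp.fixedPoint = hp.fixedPoint := hp.fixedPoint_isFixedPt
  exact ⟨hp.fixedPoint, (sub_eq_iff_eq_add.mp hfix).symm⟩

end ContractingWith

theorem Monotone.pairwise_le_abs_sub {m : ℕ} {ζ : Fin m → ℝ} (hζ : Monotone ζ) {d : ℝ}
    (hd : ∀ (k : Fin m) (hk : (k : ℕ) + 1 < m), d ≤ ζ ⟨k + 1, hk⟩ - ζ k) :
    Pairwise fun i j => d ≤ |ζ i - ζ j| := by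
  intro i j hij
  wlog hlt : i < j generalizing i j
  · rw [abs_sub_comm]
    exact this hij.symm (lt_of_le_of_ne (not_lt.mp hlt) hij.symm)
  have hk : (i : ℕ) + 1 < m := lt_of_le_of_lt hlt j.isLt
  have hnext : ζ ⟨i + 1, hk⟩ ≤ ζ j := hζ (Fin.le_def.mpr hlt)
  rw [abs_sub_comm]
  linarith [hd i hk, le_abs_self (ζ j - ζ i)]

/-- In this form `φ` is visibly `C¹`: `t ↦ max t 0 ^ 3` composed with a polynomial. -/
theorem bumpPhi_eq_max_pow (u : ℝ) : bumpPhi u = max (1 - u ^ 2) 0 ^ 3 := by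
  rw [bumpPhi]
  split_ifs with hu
  · rw [max_eq_left (by nlinarith [abs_le.mp hu, sq_abs u, abs_nonneg u])]; ring
  · rw [max_eq_right (by nlinarith [not_le.mp hu, sq_abs u, abs_nonneg u])]; ring

noncomputable def bumpProfile (u : ℝ) : ℝ := bumpPhi u * (u * |u|)

noncomputable def bumpProfileDeriv (u : ℝ) : ℝ :=
  2 * |u| * max (1 - u ^ 2) 0 ^ 2 * (1 - 4 * u ^ 2)

theorem hasDerivAt_bumpProfile (u : ℝ) : HasDerivAt bumpProfile (bumpProfileDeriv u) u := by
  have hw : HasDerivAt (fun x : ℝ => 1 - x ^ 2) (-(2 * u)) u := by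
    simpa using (hasDerivAt_pow 2 u).const_sub 1
  have h := ((hasDerivAt_max_zero_pow (by norm_num : 1 < 3) _).comp u hw).mul
    (hasDerivAt_mul_abs u)
  have hfun :
      bumpProfile = (fun x => max x 0 ^ 3) ∘ (fun x : ℝ => 1 - x ^ 2) * fun x => x * |x| := by
    ext x; simp [bumpProfile, bumpPhi_eq_max_pow]
  rw [hfun]
  refine h.congr_deriv ?_
  unfold bumpProfileDeriv
  rcases le_total (1 - u ^ 2) 0 with hu | hu
  · simp [max_eq_right hu]
  · simp only [max_eq_left hu, Function.comp]
    push_cast; ring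

theorem bumpProfileDeriv_eq_zero {u : ℝ} (hu : 1 ≤ |u|) : bumpProfileDeriv u = 0 := by
  have : 1 - u ^ 2 ≤ 0 := by nlinarith [sq_abs u]
  simp [bumpProfileDeriv, max_eq_right this]

theorem abs_bumpProfileDeriv_le (u : ℝ) : |bumpProfileDeriv u| ≤ 6 := by
  rcases le_or_gt 1 |u| with hu | hu
  · simp [bumpProfileDeriv_eq_zero hu]
  have hu2 : u ^ 2 ≤ 1 := by nlinarith [sq_abs u, abs_nonneg u]
  rw [bumpProfileDeriv, max_eq_left (by linarith), abs_mul, abs_mul, abs_mul, abs_two, abs_abs,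
    abs_of_nonneg (by positivity : 0 ≤ (1 - u ^ 2) ^ 2)]
  have h1 : (1 - u ^ 2) ^ 2 ≤ 1 := by nlinarith [sq_nonneg u]
  have h2 : |1 - 4 * u ^ 2| ≤ 3 := abs_le.mpr ⟨by linarith, by nlinarith [sq_nonneg u]⟩
  calc 2 * |u| * (1 - u ^ 2) ^ 2 * |1 - 4 * u ^ 2| ≤ 2 * 1 * 1 * 3 := by gcongr
    _ = 6 := by norm_num

theorem hasDerivAt_bump_term (a z : ℝ) {c : ℝ} (hc : 0 < c) (x : ℝ) :
    HasDerivAt (fun x => a * bumpPhi ((x - z) / c) * ((x - z) * |x - z|))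
      (a * c * bumpProfileDeriv ((x - z) / c)) x := by
  have hu : HasDerivAt (fun x => (x - z) / c) (1 / c) x :=
    ((hasDerivAt_id x).sub_const z).div_const c
  have h := ((hasDerivAt_bumpProfile _).comp x hu).const_mul (a * c ^ 2)
  have hfun : (fun x => a * bumpPhi ((x - z) / c) * ((x - z) * |x - z|))
      = fun x => a * c ^ 2 * bumpProfile ((x - z) / c) := by
    ext x
    rw [bumpProfile, abs_div, abs_of_pos hc]
    field_simp
  rw [hfun]
  exact h.congr_deriv (by field_simp)

theorem lipschitzWith_sum_bump_terms {ι : Type*} [Fintype ι] (ζ α : ι → ℝ) {c : ℝ} (hc : 0 < c)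
    (hζ : Pairwise fun i j => 2 * c ≤ |ζ i - ζ j|) :
    LipschitzWith (Finset.univ.sup fun k => (6 * |α k| * c).toNNReal)
      fun x => ∑ k, α k * bumpPhi ((x - ζ k) / c) * ((x - ζ k) * |x - ζ k|) := by
  have hd x := HasDerivAt.fun_sum fun k (_ : k ∈ Finset.univ) =>
    hasDerivAt_bump_term (α k) (ζ k) hc x
  refine lipschitzWith_of_nnnorm_deriv_le (fun x => (hd x).differentiableAt) fun x => ?_
  rw [(hd x).deriv]
  have hterm_zero {k} (hk : c ≤ |x - ζ k|) : α k * c * bumpProfileDeriv ((x - ζ k) / c) = 0 := by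
    rw [bumpProfileDeriv_eq_zero, mul_zero]
    rwa [abs_div, abs_of_pos hc, le_div_iff₀ hc, one_mul]
  refine (Finset.univ.nnnorm_sum_le_sup_of_pairwise fun i j hij => ?_).trans
    (Finset.sup_mono_fun fun k _ => ?_)
  · by_contra! hnear
    have := abs_sub_le (ζ i) x (ζ j)
    rw [abs_sub_comm (ζ i) x] at this
    linarith [hζ hij, not_le.mp (mt hterm_zero hnear.1), not_le.mp (mt hterm_zero hnear.2)]
  · rw [← NNReal.coe_le_coe, coe_nnnorm, Real.norm_eq_abs, Real.coe_toNNReal', abs_mul, abs_mul,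
      abs_of_pos hc]
    calc |α k| * c * |bumpProfileDeriv ((x - ζ k) / c)| ≤ |α k| * c * 6 := by
          gcongr; exact abs_bumpProfileDeriv_le _
      _ ≤ _ := le_max_of_le_left (le_of_eq (by ring))

theorem Gtransform_bijective_lipschitz_general
    (m : ℕ) (ζ α : Fin m → ℝ) (hζ : StrictMono ζ)
    (c : ℝ) (hc0 : 0 < c) (hc1 : ∀ k, c < 1 / (6 * |α k|))
    (hc2 : ∀ (k : Fin m) (h : (k : ℕ) + 1 < m), c < (ζ ⟨(k : ℕ) + 1, h⟩ - ζ k) / 2) :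
    Function.Bijective (Gtransform m ζ α c) ∧
      (∃ K : NNReal, LipschitzWith K (Gtransform m ζ α c)) ∧
      ∃ K : NNReal, LipschitzWith K (Function.invFun (Gtransform m ζ α c)) := by
  have hL : (Finset.univ.sup fun k => (6 * |α k| * c).toNNReal) < 1 := by
    refine (Finset.sup_lt_iff zero_lt_one).mpr fun k _ => Real.toNNReal_lt_one.mpr ?_
    rcases (abs_nonneg (α k)).eq_or_lt with hzero | hpos
    · simp [← hzero]
    · have := hc1 k
      rwa [lt_div_iff₀ (by positivity), mul_comm] at this
  have hsep := hζ.monotone.pairwise_le_abs_sub fun k hk => (by linarith [hc2 k hk] : 2 * c ≤ _)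
  have hG : ContractingWith _
      fun x => ∑ k, α k * bumpPhi ((x - ζ k) / c) * ((x - ζ k) * |x - ζ k|) :=
    ⟨hL, lipschitzWith_sum_bump_terms ζ α hc0 hsep⟩
  have hsurj := hG.surjective_id_add
  exact ⟨⟨hG.antilipschitzWith_id_add.injective, hsurj⟩, ⟨_, hG.lipschitzWith_id_add⟩,
    ⟨_, hG.antilipschitzWith_id_add.to_rightInverse (Function.rightInverse_invFun hsurj)⟩⟩

/-- The transform G is a Lipschitz bijection of ℝ with Lipschitz inverse. -/
theorem Gtransform_bijective_lipschitz
    (m : ℕ) (hm : 0 < m) (ζ α : Fin m → ℝ) (hζ : StrictMono ζ) (hα : ∀ k, α k ≠ 0)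
    (c : ℝ) (hc0 : 0 < c) (hc1 : ∀ k, c < 1 / (6 * |α k|))
    (hc2 : ∀ (k : Fin m) (h : (k : ℕ) + 1 < m), c < (ζ ⟨(k : ℕ) + 1, h⟩ - ζ k) / 2) :
    Function.Bijective (Gtransform m ζ α c) ∧
      (∃ K : NNReal, LipschitzWith K (Gtransform m ζ α c)) ∧
      ∃ K : NNReal, LipschitzWith K (Function.invFun (Gtransform m ζ α c)) :=
  Gtransform_bijective_lipschitz_general m ζ α hζ c hc0 hc1 hc2
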